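/- For every prime p ≥ 7, p divides (the numerator of) the Bernoulli number B_{p-3} if and only if ∑_{i=1}^{p-1} 1/i² ≡ 0 (mod p²), inverses taken modulo p². -/

import Mathlib

open Finset IsUltrametricDist

section Aux

variable {p : ℕ} [hp : Fact p.Prime]


lemma normA (q : ℚ) : ‖(q : ℚ_[p])‖ ≤ ((p:ℝ))⁻¹ ↔ (p:ℤ) ∣ q.num := by
  have hden : ((q.den : ℚ_[p])) * (q : ℚ_[p]) = (q.num : ℚ_[p]) := by
    have : ((q.den : ℚ)) * q = (q.num : ℚ) := by
      rw [mul_comm, Rat.mul_den_eq_num]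
    exact_mod_cast congrArg (Rat.cast : ℚ → ℚ_[p]) this
  constructor
  · intro h
    by_contra hnd
    have h1 : ‖((q.num : ℤ) : ℚ_[p])‖ = 1 := by
      have := (Padic.norm_intCast_lt_one_iff (p := p) (k := q.num)).not.mpr hnd
      have hle := Padic.norm_int_le_one (p := p) q.num
      push_neg at this
      linarith
    have h2 : ‖((q.num : ℤ) : ℚ_[p])‖ ≤ ((p:ℝ))⁻¹ := by
      rw [← hden]
      calc ‖((q.den : ℚ_[p])) * (q : ℚ_[p])‖ = ‖((q.den : ℚ_[p]))‖ * ‖(q : ℚ_[p])‖ := norm_mul _ _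
        _ ≤ 1 * ((p:ℝ))⁻¹ := by
            apply mul_le_mul _ h (norm_nonneg _) zero_le_one
            exact_mod_cast Padic.norm_int_le_one (p := p) (q.den : ℤ)
        _ = ((p:ℝ))⁻¹ := one_mul _
    rw [h1] at h2
    have : (1:ℝ) < p := by exact_mod_cast hp.out.one_lt
    have : ((p:ℝ))⁻¹ < 1 := by
      rw [inv_lt_one_iff₀]; right; exact this
    linarith
  · intro h
    have hndenom : ¬ (p:ℤ) ∣ (q.den : ℤ) := by
      intro hd
      have hpden : p ∣ q.den := Int.ofNat_dvd.mp hd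
      have hpnum : p ∣ q.num.natAbs := by
        simpa using Int.natAbs_dvd_natAbs.mpr h
      exact hp.out.one_lt.ne' (Nat.eq_one_of_dvd_coprimes q.reduced hpnum hpden)
    have hden1 : ‖((q.den : ℤ) : ℚ_[p])‖ = 1 := by
      have := (Padic.norm_intCast_lt_one_iff (p := p) (k := (q.den : ℤ))).not.mpr hndenom
      have hle := Padic.norm_int_le_one (p := p) (q.den : ℤ)
      push_neg at this
      linarith
    have hnum : ‖((q.num : ℤ) : ℚ_[p])‖ ≤ ((p:ℝ))⁻¹ := by
      have := (Padic.norm_int_le_pow_iff_dvd (p := p) q.num 1).mpr (by simpa using h)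
      simpa using this
    have : ‖(q : ℚ_[p])‖ = ‖((q.num : ℤ) : ℚ_[p])‖ := by
      rw [← hden, norm_mul]
      push_cast
      rw [show ‖((q.den : ℕ) : ℚ_[p])‖ = 1 by exact_mod_cast hden1, one_mul]
    rw [this]; exact hnum



lemma norm_natCast_le_one (n : ℕ) : ‖((n : ℚ_[p]))‖ ≤ 1 := by
  exact_mod_cast Padic.norm_int_le_one (p := p) (n : ℤ)

lemma norm_natCast_eq_one {n : ℕ} (h : ¬ p ∣ n) : ‖((n : ℚ_[p]))‖ = 1 := by
  have h1 := (Padic.norm_intCast_lt_one_iff (p := p) (k := (n:ℤ))).not.mpr (by exact_mod_cast h)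
  have h2 := Padic.norm_int_le_one (p := p) (n : ℤ)
  push_neg at h1
  have : ‖((n:ℤ) : ℚ_[p])‖ = 1 := le_antisymm h2 h1
  exact_mod_cast this

lemma bernoulli_padic_int : ∀ j, j < p - 1 → ‖((bernoulli j : ℚ) : ℚ_[p])‖ ≤ 1 := by
  intro j
  induction j using Nat.strong_induction_on with
  | _ j ih =>
    intro hj
    rcases Nat.eq_zero_or_pos j with rfl | hj0
    · simp
    have hrec := sum_bernoulli (j + 1)
    rw [if_neg (by omega), Finset.sum_range_succ, Nat.choose_succ_self_right] at hrec
    have key : ((j + 1 : ℕ) : ℚ) * bernoulli j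
        = - ∑ i ∈ range j, ((j+1).choose i : ℚ) * bernoulli i := by
      push_cast at hrec ⊢
      linarith [hrec]
    have keyP : ((j + 1 : ℕ) : ℚ_[p]) * ((bernoulli j : ℚ) : ℚ_[p])
        = - ∑ i ∈ range j, (((j+1).choose i : ℕ) : ℚ_[p]) * ((bernoulli i : ℚ) : ℚ_[p]) := by
      have := congrArg (Rat.cast : ℚ → ℚ_[p]) key
      push_cast at this ⊢
      exact this
    have hsum : ‖∑ i ∈ range j, (((j+1).choose i : ℕ) : ℚ_[p]) * ((bernoulli i : ℚ) : ℚ_[p])‖ ≤ 1 := by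
      apply norm_sum_le_of_forall_le_of_nonneg zero_le_one
      intro i hi
      rw [norm_mul]
      exact mul_le_one₀ (norm_natCast_le_one _) (norm_nonneg _)
        (ih i (mem_range.mp hi) (by have := mem_range.mp hi; omega))
    have hj1 : ‖((j + 1 : ℕ) : ℚ_[p])‖ = 1 := norm_natCast_eq_one (by
      intro hd
      have := Nat.le_of_dvd (by omega) hd
      omega)
    calc ‖((bernoulli j : ℚ) : ℚ_[p])‖
        = ‖((j + 1 : ℕ) : ℚ_[p])‖ * ‖((bernoulli j : ℚ) : ℚ_[p])‖ := by rw [hj1, one_mul]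
      _ = ‖((j + 1 : ℕ) : ℚ_[p]) * ((bernoulli j : ℚ) : ℚ_[p])‖ := (norm_mul _ _).symm
      _ ≤ 1 := by rw [keyP, norm_neg]; exact hsum



lemma faulhaber_est (h7 : 7 ≤ p) :
    ‖((∑ i ∈ range p, (i:ℚ)^(p-3) : ℚ) : ℚ_[p]) - (p:ℚ_[p]) * ((bernoulli (p-3) : ℚ) : ℚ_[p])‖
      ≤ (p:ℝ)^(-2:ℤ) := by
  set k := p - 3 with hk
  have hsrp := sum_range_pow p k
  rw [Finset.sum_range_succ] at hsrp
  have hne : ((k:ℚ) + 1) ≠ 0 := by positivity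
  have hlast : bernoulli k * ((k+1).choose k) * (p:ℚ)^(k+1-k) / ((k:ℚ)+1)
      = (p:ℚ) * bernoulli k := by
    rw [Nat.choose_succ_self_right, show k+1-k = 1 from by omega, pow_one]
    push_cast
    field_simp
  rw [hlast] at hsrp
  have key : ((∑ i ∈ range p, (i:ℚ)^k) : ℚ) - (p:ℚ) * bernoulli k
      = ∑ i ∈ range k, bernoulli i * ((k+1).choose i) * (p:ℚ)^(k+1-i) / (((k+1 : ℕ)) : ℚ) := by
    rw [hsrp]; push_cast; ring
  have keyP : ((∑ i ∈ range p, (i:ℚ)^k : ℚ) : ℚ_[p]) - (p:ℚ_[p]) * ((bernoulli k : ℚ) : ℚ_[p])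
      = ∑ i ∈ range k,
          ((bernoulli i : ℚ) : ℚ_[p]) * (((k+1).choose i : ℕ) : ℚ_[p]) * ((p : ℚ_[p]))^(k+1-i)
            / ((k+1 : ℕ) : ℚ_[p]) := by
    have h := congrArg (Rat.cast : ℚ → ℚ_[p]) key
    have e1 : ((∑ i ∈ range p, (i:ℚ)^k : ℚ) : ℚ_[p]) - (p:ℚ_[p]) * ((bernoulli k : ℚ) : ℚ_[p])
        = (((∑ i ∈ range p, (i:ℚ)^k) - (p:ℚ) * bernoulli k : ℚ) : ℚ_[p]) := by
      push_cast
      ring_nf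
    rw [e1, h, Rat.cast_sum]
    apply Finset.sum_congr rfl
    intro i _
    rw [Rat.cast_div, Rat.cast_mul, Rat.cast_mul, Rat.cast_pow]
    push_cast
    ring
  rw [keyP]
  apply norm_sum_le_of_forall_le_of_nonneg (by positivity)
  intro i hi
  have hi' : i < k := mem_range.mp hi
  by_cases hodd : i = p - 4
  · have hz : bernoulli i = 0 := by
      subst hodd
      rw [bernoulli_eq_bernoulli'_of_ne_one (by omega)]
      apply bernoulli'_eq_zero_of_odd _ (by omega)
      have hpodd : Odd p := hp.out.odd_of_ne_two (by omega)
      rcases hpodd with ⟨m, hm⟩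
      exact ⟨m - 2, by omega⟩
    rw [hz]
    simp only [Rat.cast_zero, zero_mul, zero_div, norm_zero]
    positivity
  · have hile : i ≤ p - 5 := by omega
    rw [norm_div, norm_mul, norm_mul]
    have h1 : ‖((bernoulli i : ℚ) : ℚ_[p])‖ ≤ 1 := bernoulli_padic_int i (by omega)
    have h2 : ‖(((k+1).choose i : ℕ) : ℚ_[p])‖ ≤ 1 := norm_natCast_le_one _
    have h3 : ‖((p:ℚ_[p]))^(k+1-i)‖ ≤ (p:ℝ)^(-2:ℤ) := by
      rw [Padic.norm_p_pow]
      apply zpow_le_zpow_right₀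
      · exact_mod_cast hp.out.one_lt.le
      · omega
    have h4 : ‖((k+1 : ℕ) : ℚ_[p])‖ = 1 := norm_natCast_eq_one (by
      intro hd
      have := Nat.le_of_dvd (by omega) hd
      omega)
    rw [h4, div_one]
    calc ‖((bernoulli i : ℚ) : ℚ_[p])‖ * ‖(((k+1).choose i : ℕ) : ℚ_[p])‖ * ‖((p:ℚ_[p]))^(k+1-i)‖
        ≤ 1 * 1 * ((p:ℝ)^(-2:ℤ)) := by
          apply mul_le_mul (by
            apply mul_le_mul h1 h2 (norm_nonneg _) zero_le_one) h3 (norm_nonneg _) (by norm_num)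
      _ = (p:ℝ)^(-2:ℤ) := by ring



lemma dvd_num_iff (h7 : 7 ≤ p) :
    (p:ℤ) ∣ (bernoulli (p-3)).num ↔ p^2 ∣ (∑ i ∈ Icc 1 (p-1), i^(p-3)) := by
  set S₀ : ℕ := ∑ i ∈ Icc 1 (p-1), i^(p-3) with hS₀
  -- the natural sum equals the rational range sum
  have hrange : Finset.range p = insert 0 (Icc 1 (p-1)) := by
    ext x
    simp only [mem_range, mem_insert, mem_Icc]
    omega
  have hcast : ((S₀ : ℚ)) = ∑ i ∈ range p, (i:ℚ)^(p-3) := by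
    rw [hS₀, hrange, Finset.sum_insert (by simp)]
    push_cast
    rw [zero_pow (show p - 3 ≠ 0 by omega)]
    ring
  have hE := faulhaber_est (p := p) h7
  set Sq : ℚ_[p] := ((∑ i ∈ range p, (i:ℚ)^(p-3) : ℚ) : ℚ_[p]) with hSq
  set B : ℚ_[p] := ((bernoulli (p-3) : ℚ) : ℚ_[p]) with hB
  have hple : (1:ℝ) < (p:ℝ) := by exact_mod_cast hp.out.one_lt
  have hppos : (0:ℝ) < (p:ℝ)⁻¹ := by positivity
  have hnormS_iff : ‖Sq‖ ≤ (p:ℝ)^(-2:ℤ) ↔ ‖(p:ℚ_[p]) * B‖ ≤ (p:ℝ)^(-2:ℤ) := by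
    constructor
    · intro h
      have : (p:ℚ_[p]) * B = Sq - (Sq - (p:ℚ_[p]) * B) := by ring
      rw [this, sub_eq_add_neg]
      calc ‖Sq + -(Sq - (p:ℚ_[p]) * B)‖ ≤ max ‖Sq‖ ‖-(Sq - (p:ℚ_[p]) * B)‖ :=
            Padic.nonarchimedean _ _
        _ ≤ (p:ℝ)^(-2:ℤ) := by rw [norm_neg]; exact max_le h hE
    · intro h
      have : Sq = (p:ℚ_[p]) * B + (Sq - (p:ℚ_[p]) * B) := by ring
      rw [this]
      calc ‖(p:ℚ_[p]) * B + (Sq - (p:ℚ_[p]) * B)‖ ≤ _ := Padic.nonarchimedean _ _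
        _ ≤ (p:ℝ)^(-2:ℤ) := max_le h hE
  have hnormpB : ‖(p:ℚ_[p]) * B‖ = (p:ℝ)⁻¹ * ‖B‖ := by
    rw [norm_mul, Padic.norm_p]
  have hnormpB_iff : ‖(p:ℚ_[p]) * B‖ ≤ (p:ℝ)^(-2:ℤ) ↔ ‖B‖ ≤ (p:ℝ)⁻¹ := by
    rw [hnormpB, show ((p:ℝ))^(-2:ℤ) = (p:ℝ)⁻¹ * (p:ℝ)⁻¹ by
      rw [← zpow_neg_one, ← zpow_add₀ (show (p:ℝ) ≠ 0 by positivity)]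
      norm_num]
    exact mul_le_mul_iff_right₀ hppos
  have hdvdS : ‖Sq‖ ≤ (p:ℝ)^(-2:ℤ) ↔ (p:ℤ)^2 ∣ (S₀ : ℤ) := by
    have : Sq = (((S₀ : ℤ)) : ℚ_[p]) := by
      rw [hSq, ← hcast]
      push_cast
      ring
    rw [this]
    simpa using Padic.norm_int_le_pow_iff_dvd (p := p) (S₀ : ℤ) 2
  constructor
  · intro h
    have hB1 : ‖B‖ ≤ (p:ℝ)⁻¹ := (normA _).mpr h
    have := hdvdS.mp (hnormS_iff.mpr (hnormpB_iff.mpr hB1))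
    exact_mod_cast this
  · intro h
    have : (p:ℤ)^2 ∣ (S₀ : ℤ) := by exact_mod_cast h
    exact (normA _).mp (hnormpB_iff.mp (hnormS_iff.mp (hdvdS.mpr this)))



-- p ∣ a - b  →  p² ∣ aᵖ - bᵖ  (integers)
lemma int_pow_p_cong (a b : ℤ) (h : (p:ℤ) ∣ a - b) : (p:ℤ)^2 ∣ a^p - b^p := by
  have hfac : a^p - b^p = (∑ i ∈ range p, a ^ i * b ^ (p - 1 - i)) * (a - b) :=
    (geom_sum₂_mul a b p).symm ▸ rfl
  obtain ⟨c, hc⟩ := h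
  have hsum : (p:ℤ) ∣ ∑ i ∈ range p, a ^ i * b ^ (p - 1 - i) := by
    have hz : ((∑ i ∈ range p, a ^ i * b ^ (p - 1 - i) : ℤ) : ZMod p) = 0 := by
      push_cast
      have hab : ((a : ZMod p)) = (b : ZMod p) := by
        have : ((a - b : ℤ) : ZMod p) = 0 := by
          rw [ZMod.intCast_zmod_eq_zero_iff_dvd]; exact ⟨c, hc⟩
        push_cast at this
        linear_combination this
      calc ∑ i ∈ range p, (a:ZMod p) ^ i * (b:ZMod p) ^ (p - 1 - i)
          = ∑ i ∈ range p, (b:ZMod p) ^ i * (b:ZMod p) ^ (p - 1 - i) := by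
            apply Finset.sum_congr rfl; intro i _; rw [hab]
        _ = ∑ i ∈ range p, (b:ZMod p) ^ (p-1) := by
            apply Finset.sum_congr rfl
            intro i hi
            rw [← pow_add]
            congr 1
            have := mem_range.mp hi
            omega
        _ = (p : ZMod p) * (b:ZMod p)^(p-1) := by
            rw [Finset.sum_const, card_range, nsmul_eq_mul]
        _ = 0 := by rw [ZMod.natCast_self, zero_mul]
    rwa [ZMod.intCast_zmod_eq_zero_iff_dvd] at hz
  obtain ⟨d, hd⟩ := hsum
  rw [hfac, hd, hc]
  ring_nf
  exact ⟨d * c, by ring⟩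

-- a ≡ b mod p  →  aᵖ = bᵖ in ZMod p²
lemma pow_p_cast_eq {a b : ℕ} (h : (a : ZMod p) = (b : ZMod p)) :
    (a : ZMod (p^2))^p = (b : ZMod (p^2))^p := by
  have h1 : (p:ℤ) ∣ (a:ℤ) - (b:ℤ) := by
    rwa [← ZMod.intCast_zmod_eq_zero_iff_dvd, Int.cast_sub, sub_eq_zero, Int.cast_natCast,
      Int.cast_natCast]
  have h2 := int_pow_p_cong (p := p) a b h1
  have h3 : (((a:ℤ)^p - (b:ℤ)^p : ℤ) : ZMod (p^2)) = 0 := by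
    rw [ZMod.intCast_zmod_eq_zero_iff_dvd]
    exact_mod_cast h2
  push_cast at h3
  linear_combination h3



lemma pointwise_id (h7 : 7 ≤ p) {i : ℕ} (hi1 : 1 ≤ i) (hi2 : i ≤ p - 1) :
    3 * ((i : ZMod (p^2))^2)⁻¹
      = 2 * (i : ZMod (p^2))^(p-3) + (i : ZMod (p^2))^(p*(p-3)) := by
  haveI : NeZero (p^2) := ⟨by positivity⟩
  set u : ZMod (p^2) := (i : ZMod (p^2)) with hu
  have hndvd : ¬ p ∣ i := by
    intro hd
    have := Nat.le_of_dvd (by omega) hd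
    omega
  have hcop : Nat.Coprime i (p^2) :=
    Nat.Coprime.pow_right _ ((Nat.Prime.coprime_iff_not_dvd hp.out).mpr hndvd).symm
  have hunit : IsUnit u := (ZMod.isUnit_iff_coprime i (p^2)).mpr hcop
  -- Fermat quotient
  have hipow : 1 ≤ i^(p-1) := Nat.one_le_pow _ _ (by omega)
  have hdvd : p ∣ i^(p-1) - 1 := by
    rw [← ZMod.natCast_eq_zero_iff]
    have hne : (i : ZMod p) ≠ 0 := by
      rw [Ne, ZMod.natCast_eq_zero_iff]; exact hndvd
    have := ZMod.pow_card_sub_one_eq_one hne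
    push_cast [Nat.cast_sub hipow]
    rw [this]; ring
  obtain ⟨m, hm⟩ := hdvd
  have hps : ((p:ZMod (p^2)) * (p:ZMod (p^2))) = 0 := by
    have : ((p^2 : ℕ) : ZMod (p^2)) = 0 := ZMod.natCast_self _
    push_cast at this
    linear_combination this
  set ε : ZMod (p^2) := (p : ZMod (p^2)) * (m : ZMod (p^2)) with hε
  have hx : u^(p-1) = 1 + ε := by
    have : ((i^(p-1) - 1 : ℕ) : ZMod (p^2)) = ((p * m : ℕ) : ZMod (p^2)) := by rw [hm]
    push_cast [Nat.cast_sub hipow] at this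
    rw [hε, ← this, hu]
    push_cast
    ring
  have hε2 : ε * ε = 0 := by
    rw [hε]
    calc (p:ZMod (p^2)) * (m:ZMod (p^2)) * ((p:ZMod (p^2)) * (m:ZMod (p^2)))
        = ((p:ZMod (p^2)) * (p:ZMod (p^2))) * ((m:ZMod (p^2)) * (m:ZMod (p^2))) := by ring
      _ = 0 := by rw [hps, zero_mul]
  have hpε : (p : ZMod (p^2)) * ε = 0 := by
    rw [hε, ← mul_assoc, hps, zero_mul]
  have hbin : ∀ n : ℕ, (1 + ε)^n = 1 + (n : ZMod (p^2)) * ε := by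
    intro n
    induction n with
    | zero => simp
    | succ n ih =>
      calc (1+ε)^(n+1) = (1+ε)^n * (1+ε) := pow_succ _ _
        _ = (1 + (n : ZMod (p^2))*ε)*(1+ε) := by rw [ih]
        _ = 1 + ((n+1 : ℕ) : ZMod (p^2)) * ε := by
            push_cast
            linear_combination (n : ZMod (p^2)) * hε2
  have hkey : 2 * u^(p-1) + (u^(p-1))^(p-2) = 3 := by
    rw [hx, hbin (p-2)]
    have hc : ((p - 2 : ℕ) : ZMod (p^2)) = (p : ZMod (p^2)) - 2 := by
      push_cast [Nat.cast_sub (show 2 ≤ p by omega)]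
      ring
    rw [hc]
    ring_nf
    linear_combination (1 : ZMod (p^2)) * hpε
  -- now multiply by (u^2)⁻¹
  have hu2 : IsUnit (u^2) := hunit.pow 2
  have hinv : u^2 * (u^2)⁻¹ = 1 := ZMod.mul_inv_of_unit _ hu2
  have e1 : u^(p-1) = u^(p-3) * u^2 := by
    rw [← pow_add]
    congr 1
    omega
  have e2 : (u^(p-1))^(p-2) = u^(p*(p-3)) * u^2 := by
    rw [← pow_mul, ← pow_add]
    congr 1
    have h3 : 3 ≤ p := by omega
    zify [show 1 ≤ p by omega, show 2 ≤ p by omega, show 3 ≤ p by omega]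
    ring
  calc 3 * (u^2)⁻¹ = (2 * u^(p-1) + (u^(p-1))^(p-2)) * (u^2)⁻¹ := by rw [hkey]
    _ = 2 * u^(p-3) * (u^2 * (u^2)⁻¹) + u^(p*(p-3)) * (u^2 * (u^2)⁻¹) := by
        rw [e2, e1]; ring
    _ = 2 * u^(p-3) + u^(p*(p-3)) := by rw [hinv]; ring



lemma char_sum_zero (h7 : 7 ≤ p) :
    ∑ i ∈ Icc 1 (p-1), (i : ZMod (p^2))^(p*(p-3)) = 0 := by
  haveI : NeZero (p^2) := ⟨by positivity⟩
  set φ : (ZMod p)ˣ → ZMod (p^2) := fun z => (((z : ZMod p).val : ZMod (p^2)))^(p*(p-3)) with hφ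
  have hcop : ∀ i, i ∈ Icc 1 (p-1) → Nat.Coprime i p := by
    intro i hi
    have h2 := mem_Icc.mp hi
    apply Nat.Coprime.symm
    apply (Nat.Prime.coprime_iff_not_dvd hp.out).mpr
    intro hd
    have := Nat.le_of_dvd (by omega) hd
    omega
  have step1 : ∑ i ∈ Icc 1 (p-1), (i : ZMod (p^2))^(p*(p-3)) = ∑ z : (ZMod p)ˣ, φ z := by
    apply Finset.sum_bij' (i := fun i hi => ZMod.unitOfCoprime i (hcop i hi))
      (j := fun z _ => (z : ZMod p).val)
    case hi => intro a ha; exact mem_univ _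
    case hj =>
      intro z _
      have hz : (z : ZMod p) ≠ 0 := z.ne_zero
      have hval : (z : ZMod p).val < p := ZMod.val_lt _
      have hval0 : (z : ZMod p).val ≠ 0 := by
        intro h0
        apply hz
        have h1 := ZMod.natCast_rightInverse (n := p) (z : ZMod p)
        rw [← h1, h0]
        simp
      rw [mem_Icc]
      omega
    case left_neg =>
      intro a ha
      have h2 := mem_Icc.mp ha
      simp only [ZMod.coe_unitOfCoprime]
      exact ZMod.val_natCast_of_lt (by omega)
    case right_neg =>
      intro z _
      apply Units.ext
      simp only [ZMod.coe_unitOfCoprime]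
      exact ZMod.natCast_rightInverse (n := p) _
    case h =>
      intro i hi
      have h2 := mem_Icc.mp hi
      rw [hφ]
      simp only [ZMod.coe_unitOfCoprime]
      rw [ZMod.val_natCast_of_lt (by omega)]
  rw [step1]
  obtain ⟨g, hg⟩ := IsCyclic.exists_generator (α := (ZMod p)ˣ)
  have horder : orderOf g = p - 1 := by
    rw [orderOf_eq_card_of_forall_mem_zpowers hg, Nat.card_eq_fintype_card,
      ZMod.card_units_eq_totient, Nat.totient_prime hp.out]
  have hmul : ∀ z : (ZMod p)ˣ, φ (g * z) = φ g * φ z := by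
    intro z
    rw [hφ]
    simp only
    have h1 : ((((g*z) : (ZMod p)ˣ) : ZMod p).val : ZMod p)
        = (((g : ZMod p).val * (z : ZMod p).val : ℕ) : ZMod p) := by
      push_cast
      rw [ZMod.natCast_val, ZMod.natCast_val, ZMod.natCast_val,
        ZMod.cast_id, ZMod.cast_id, ZMod.cast_id]
    have h2 := pow_p_cast_eq (p := p) h1
    rw [pow_mul, pow_mul, pow_mul, h2]
    rw [show ((((g : ZMod p).val * (z : ZMod p).val : ℕ)) : ZMod (p^2))
        = ((g : ZMod p).val : ZMod (p^2)) * ((z : ZMod p).val : ZMod (p^2)) by push_cast; ring]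
    rw [mul_pow, mul_pow]
  have htrans : ∑ z : (ZMod p)ˣ, φ z = φ g * ∑ z : (ZMod p)ˣ, φ z := by
    have hre : ∑ z : (ZMod p)ˣ, φ (g * z) = ∑ z : (ZMod p)ˣ, φ z :=
      Fintype.sum_bijective (g * ·) (Group.mulLeft_bijective g) _ φ (fun x => rfl)
    rw [Finset.mul_sum, ← hre]
    apply Finset.sum_congr rfl
    intro z _
    exact hmul z
  have hfactor : (φ g - 1) * ∑ z : (ZMod p)ˣ, φ z = 0 := by
    rw [sub_mul, one_mul, ← htrans, sub_self]
  set a : ℕ := (g : ZMod p).val with ha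
  have hava : (a : ZMod p) = (g : ZMod p) := ZMod.natCast_rightInverse (n := p) _
  have ha0 : a ≠ 0 := by
    intro h0
    have : (a : ZMod p) = 0 := by rw [h0]; simp
    rw [hava] at this
    exact g.ne_zero this
  have ha1 : 1 ≤ a^(p*(p-3)) := Nat.one_le_pow _ _ (by omega)
  have hnd : ¬ p ∣ a^(p*(p-3)) - 1 := by
    intro hd
    have hz : ((a^(p*(p-3)) - 1 : ℕ) : ZMod p) = 0 := (ZMod.natCast_eq_zero_iff _ _).mpr hd
    push_cast [Nat.cast_sub ha1] at hz
    rw [hava] at hz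
    have hg1 : (g : ZMod p)^(p*(p-3)) = 1 := by linear_combination hz
    have hgu : g^(p*(p-3)) = 1 := by
      apply Units.ext
      push_cast
      exact hg1
    have hdord := orderOf_dvd_of_pow_eq_one hgu
    rw [horder] at hdord
    have hcop2 : Nat.Coprime (p-1) p := by
      have hdd := Nat.dvd_sub (Nat.gcd_dvd_right (p-1) p) (Nat.gcd_dvd_left (p-1) p)
      rw [show p - (p-1) = 1 by omega] at hdd
      exact Nat.eq_one_of_dvd_one hdd
    have hdvd3 : (p-1) ∣ (p-3) := hcop2.dvd_of_dvd_mul_left hdord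
    have := Nat.le_of_dvd (by omega) hdvd3
    omega
  have hφg : φ g - 1 = ((a^(p*(p-3)) - 1 : ℕ) : ZMod (p^2)) := by
    rw [hφ]
    push_cast [Nat.cast_sub ha1]
    ring
  have hunit : IsUnit (φ g - 1) := by
    rw [hφg]
    apply (ZMod.isUnit_iff_coprime _ _).mpr
    apply Nat.Coprime.pow_right
    exact ((Nat.Prime.coprime_iff_not_dvd hp.out).mpr hnd).symm
  exact (hunit.mul_right_eq_zero).mp hfactor



end Aux

theorem bernoulli_iff_inv_square (p : ℕ) (hp : p.Prime) (h7 : 7 ≤ p) :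
    ((p : ℤ) ∣ (bernoulli (p - 3)).num) ↔
      (∑ i ∈ Finset.Icc 1 (p - 1), ((i : ZMod (p ^ 2)) ^ 2)⁻¹ = 0) := by
  haveI hF : Fact p.Prime := ⟨hp⟩
  haveI : NeZero (p^2) := ⟨by positivity⟩
  set Sinv : ZMod (p^2) := ∑ i ∈ Finset.Icc 1 (p-1), ((i : ZMod (p ^ 2)) ^ 2)⁻¹ with hSinv
  set S : ZMod (p^2) := ∑ i ∈ Finset.Icc 1 (p-1), (i : ZMod (p ^ 2)) ^ (p-3) with hS
  have h2u : IsUnit (2 : ZMod (p^2)) := by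
    rw [show (2 : ZMod (p^2)) = ((2:ℕ) : ZMod (p^2)) by push_cast; ring]
    exact (ZMod.isUnit_iff_coprime _ _).mpr
      (Nat.Coprime.pow_right _ ((Nat.coprime_primes Nat.prime_two hp).mpr (by omega)))
  have h3u : IsUnit (3 : ZMod (p^2)) := by
    rw [show (3 : ZMod (p^2)) = ((3:ℕ) : ZMod (p^2)) by push_cast; ring]
    exact (ZMod.isUnit_iff_coprime _ _).mpr
      (Nat.Coprime.pow_right _ ((Nat.coprime_primes Nat.prime_three hp).mpr (by omega)))
  have hsum : 3 * Sinv = 2 * S := by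
    rw [hSinv, hS, Finset.mul_sum, Finset.mul_sum]
    have : ∑ i ∈ Finset.Icc 1 (p-1), 3 * ((i : ZMod (p ^ 2)) ^ 2)⁻¹
        = ∑ i ∈ Finset.Icc 1 (p-1),
            (2 * (i : ZMod (p ^ 2))^(p-3) + (i : ZMod (p ^ 2))^(p*(p-3))) := by
      apply Finset.sum_congr rfl
      intro i hi
      have h2 := Finset.mem_Icc.mp hi
      exact pointwise_id h7 h2.1 h2.2
    rw [this, Finset.sum_add_distrib, char_sum_zero h7, add_zero]
  have hSzero : S = 0 ↔ p^2 ∣ (∑ i ∈ Finset.Icc 1 (p-1), i^(p-3)) := by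
    rw [hS]
    rw [show (∑ i ∈ Finset.Icc 1 (p-1), (i : ZMod (p ^ 2)) ^ (p-3))
        = (((∑ i ∈ Finset.Icc 1 (p-1), i^(p-3) : ℕ)) : ZMod (p^2)) by push_cast; ring]
    exact ZMod.natCast_eq_zero_iff _ _
  rw [dvd_num_iff h7]
  rw [← hSzero]
  constructor
  · intro h
    have h2 : 3 * Sinv = 0 := by rw [hsum, h, mul_zero]
    exact (h3u.mul_right_eq_zero).mp h2
  · intro h
    have h2 : 2 * S = 0 := by rw [← hsum, h, mul_zero]
    exact (h2u.mul_right_eq_zero).mp h2
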